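/- arXiv:2410.09257 — 2 statements merged into one kernel-verified Lean document; each statement's English description precedes it below -/
import Mathlib

section
/- Let p and p' be two directed simple paths from s to t in a finite directed graph with arc lengths r̄ : E → ℝ. Suppose every arc of p has r̄-length ≤ 0, every arc of p' that leaves a vertex not on p has r̄-length ≥ 0, and for every vertex u on both p and p', if (u,v) is the arc of p leaving u and (u,v') the arc of p' leaving u, then r̄(u,v') ≥ r̄(u,v). Then the total r̄-length of p' is at least the total r̄-length of p. -/
/-!
Group the arcs of both paths by their source vertex. A simple path ending at `t` leaves each of
its vertices other than `t` by exactly one arc, and no other vertex. So at every vertex `u` the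
contribution of `p` is at most that of `p'`: if both paths leave `u`, this is the comparison
hypothesis; if only `p` leaves `u`, its arc is nonpositive; if only `p'` leaves `u`, then `u` is
not on `p` (otherwise `u ≠ t` and `p` would leave it too), so the arc of `p'` is nonnegative.
-/

open scoped Classical

variable {V : Type*}

/-- The total length of a walk, given as a list of vertices. -/
def pathCost (r : V → V → ℝ) (p : List V) : ℝ :=
  ((p.zip p.tail).map fun q => r q.1 q.2).sum

/-- A directed (simple) path from `s` to `t`, as a list of vertices. -/
def IsPathL (E : V → V → Prop) (s t : V) (p : List V) : Prop :=
  List.Chain' E p ∧ p.head? = some s ∧ p.getLast? = some t ∧ p.Nodup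

/-- `(u,v)` is an arc of the path `p` (a consecutive pair of vertices). -/
def ArcOf (p : List V) (u v : V) : Prop := (u, v) ∈ p.zip p.tail

section Arcs

variable {p : List V} {u v v' t : V}

theorem List.Nodup.zip_tail (hp : p.Nodup) : (p.zip p.tail).Nodup :=
  .of_map Prod.snd <| by
    rw [List.map_snd_zip (by simp)]
    exact hp.sublist (List.tail_sublist p)

theorem arcOf_iff_getElem :
    ArcOf p u v ↔ ∃ (i : ℕ) (h : i + 1 < p.length), p[i] = u ∧ p[i + 1] = v := by
  simp only [ArcOf, List.mem_iff_getElem, List.getElem_zip, List.getElem_tail, List.length_zip,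
    List.length_tail, Prod.mk.injEq]
  constructor
  · rintro ⟨i, hi, rfl, rfl⟩
    exact ⟨i, by omega, rfl, rfl⟩
  · rintro ⟨i, hi, rfl, rfl⟩
    exact ⟨i, by omega, rfl, rfl⟩

theorem ArcOf.right_unique (hp : p.Nodup) (h : ArcOf p u v) (h' : ArcOf p u v') : v = v' := by
  obtain ⟨i, hi, rfl, rfl⟩ := arcOf_iff_getElem.1 h
  obtain ⟨j, hj, hji, rfl⟩ := arcOf_iff_getElem.1 h'
  obtain rfl : j = i := hp.getElem_inj_iff.1 hji
  rfl

theorem ArcOf.ne_of_getLast?_eq (hp : p.Nodup) (h : ArcOf p u v) (ht : p.getLast? = some t) :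
    u ≠ t := by
  obtain ⟨i, hi, rfl, -⟩ := arcOf_iff_getElem.1 h
  obtain ⟨hl, rfl⟩ := List.getElem?_eq_some_iff.1 (List.getLast?_eq_getElem? ▸ ht)
  rw [Ne, hp.getElem_inj_iff]
  omega

theorem exists_arcOf_of_ne_of_getLast?_eq (hu : u ∈ p) (ht : p.getLast? = some t) (hne : u ≠ t) :
    ∃ v, ArcOf p u v := by
  obtain ⟨i, hi, rfl⟩ := List.mem_iff_getElem.1 hu
  obtain ⟨hl, rfl⟩ := List.getElem?_eq_some_iff.1 (List.getLast?_eq_getElem? ▸ ht)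
  have hi' : i + 1 < p.length := by
    by_contra
    exact hne (by congr 1; omega)
  exact ⟨_, arcOf_iff_getElem.2 ⟨i, hi', rfl, rfl⟩⟩

end Arcs

section OutCost

variable {p : List V} {u v : V}

noncomputable def outCost (r : V → V → ℝ) (p : List V) (u : V) : ℝ :=
  ∑ a ∈ (p.zip p.tail).toFinset with a.1 = u, r a.1 a.2

theorem pathCost_eq_sum_outCost (r : V → V → ℝ) (hp : p.Nodup) {S : Finset V}
    (hS : ∀ u ∈ p, u ∈ S) : pathCost r p = ∑ u ∈ S, outCost r p u := by
  rw [pathCost, ← List.sum_toFinset _ hp.zip_tail]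
  refine (Finset.sum_fiberwise_of_maps_to (fun a ha => hS _ ?_) _).symm
  exact (List.of_mem_zip (List.mem_toFinset.1 ha)).1

theorem outCost_eq (r : V → V → ℝ) (hp : p.Nodup) (h : ArcOf p u v) : outCost r p u = r u v := by
  refine Finset.sum_eq_single_of_mem (u, v) (by simpa [ArcOf] using h) ?_
  rintro ⟨u', w⟩ ha hne
  simp only [Finset.mem_filter, List.mem_toFinset] at ha
  obtain ⟨hw, rfl⟩ := ha
  obtain rfl := h.right_unique hp hw
  exact absurd rfl hne

theorem outCost_eq_zero (r : V → V → ℝ) (h : ∀ v, ¬ArcOf p u v) : outCost r p u = 0 :=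
  Finset.sum_eq_zero fun a ha => by
    simp only [Finset.mem_filter, List.mem_toFinset] at ha
    obtain ⟨ha, rfl⟩ := ha
    exact absurd ha (h a.2)

theorem outCost_nonpos {r : V → V → ℝ} (h : ∀ v, ArcOf p u v → r u v ≤ 0) : outCost r p u ≤ 0 :=
  Finset.sum_nonpos fun a ha => by
    simp only [Finset.mem_filter, List.mem_toFinset] at ha
    obtain ⟨ha, rfl⟩ := ha
    exact h a.2 ha

end OutCost

theorem outCost_le_outCost {r : V → V → ℝ} {p p' : List V} {t u : V}
    (hp : p.Nodup) (hp' : p'.Nodup) (ht : p.getLast? = some t) (ht' : p'.getLast? = some t)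
    (hpneg : ∀ v, ArcOf p u v → r u v ≤ 0)
    (hoff : ∀ v', ArcOf p' u v' → u ∉ p → 0 ≤ r u v')
    (hcmp : ∀ v v', ArcOf p u v → ArcOf p' u v' → r u v ≤ r u v') :
    outCost r p u ≤ outCost r p' u := by
  by_cases h' : ∃ v', ArcOf p' u v'
  · obtain ⟨v', hv'⟩ := h'
    rw [outCost_eq r hp' hv']
    by_cases h : ∃ v, ArcOf p u v
    · obtain ⟨v, hv⟩ := h
      rw [outCost_eq r hp hv]
      exact hcmp v v' hv hv'
    · have hu : u ∉ p := fun hu =>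
        h (exists_arcOf_of_ne_of_getLast?_eq hu ht (hv'.ne_of_getLast?_eq hp' ht'))
      rw [outCost_eq_zero r (not_exists.1 h)]
      exact hoff v' hv' hu
  · rw [outCost_eq_zero r (not_exists.1 h')]
    exact outCost_nonpos hpneg

theorem exchange_argument_general
    (E : V → V → Prop) (s t : V) (rbar : V → V → ℝ)
    (p p' : List V)
    (hp : IsPathL E s t p) (hp' : IsPathL E s t p')
    (hpneg : ∀ u v, ArcOf p u v → rbar u v ≤ 0)
    (hoff : ∀ u v', ArcOf p' u v' → u ∉ p → 0 ≤ rbar u v')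
    (hcmp : ∀ u v v', ArcOf p u v → ArcOf p' u v' → rbar u v ≤ rbar u v') :
    pathCost rbar p ≤ pathCost rbar p' := by
  obtain ⟨-, -, ht, hnd⟩ := hp
  obtain ⟨-, -, ht', hnd'⟩ := hp'
  rw [pathCost_eq_sum_outCost rbar hnd (S := p.toFinset ∪ p'.toFinset) (by simp +contextual),
    pathCost_eq_sum_outCost rbar hnd' (S := p.toFinset ∪ p'.toFinset) (by simp +contextual)]
  exact Finset.sum_le_sum fun u _ =>
    outCost_le_outCost hnd hnd' ht ht' (hpneg u) (hoff u) (hcmp u)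

/-- exchange argument of Lemma 4.2: if every arc of `p` has `r̄`-length
`≤ 0`, every arc of `p'` leaving a vertex not on `p` has `r̄`-length `≥ 0`, and at every
common vertex the arc of `p'` is at least as long as the arc of `p`, then the total
`r̄`-length of `p'` is at least that of `p`. -/
theorem exchange_argument [Fintype V]
    (E : V → V → Prop) (s t : V) (rbar : V → V → ℝ)
    (p p' : List V)
    (hp : IsPathL E s t p) (hp' : IsPathL E s t p')
    (hpneg : ∀ u v, ArcOf p u v → rbar u v ≤ 0)
    (hoff : ∀ u v', ArcOf p' u v' → u ∉ p → 0 ≤ rbar u v')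
    (hcmp : ∀ u v v', ArcOf p u v → ArcOf p' u v' → rbar u v ≤ rbar u v') :
    pathCost rbar p ≤ pathCost rbar p' :=
  exchange_argument_general E s t rbar p p' hp hp' hpneg hoff hcmp
end

section
/- In the modified Dijkstra algorithm with blocking systems: given a finite directed graph G = (V, E) with nonnegative arc weights r, target t, and an independence system ℐ(u) on the outgoing arcs of each u ≠ t with E(u) ∉ ℐ(u), the algorithm outputs φ : V → ℝ ∪ {+∞} and blocking sets Î(u) ∈ ℐ(u) such that for every u ≠ t with φ(u) < +∞: φ(u) ≥ r(u,v) + φ(v) for all (u,v) ∈ Î(u); φ(u) ≤ r(u,v) + φ(v) for all unblocked arcs (u,v) ∈ E(u) \ Î(u); φ(u) = r(u,v_u) + φ(v_u) for some unblocked arc (u, v_u); and the set {(u,v) ∈ E(u) : φ(u) ≥ r(u,v) + φ(v)} is dependent (not in ℐ(u)). Consequently φ(u) equals the maximum, over all admissible subgraphs (obtained by removing an independent set of arcs at each vertex), of the shortest r-distance from u to t. -/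
open scoped Classical

variable {V : Type*}

/-- The shortest `r`-distance from `u` to `t` in the subgraph obtained by blocking, at
each vertex `w`, the arcs leading to `I w` (`+∞` if there is no such path). -/
noncomputable def blockedDist (E : V → V → Prop) (r : V → V → ℝ) (t : V)
    (I : V → Set V) (u : V) : EReal :=
  sInf {c : EReal | ∃ p, IsPathL (fun a b => E a b ∧ b ∉ I a) u t p ∧
    c = (pathCost r p : ℝ)}

/-!
At a vertex `u ≠ t`, an adversary who knows the values `ψ v` of the out-neighbours can keep the
distance from `u` up to the least level `d` at which the arcs with `r u v + ψ v ≤ d` can no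
longer all be blocked. The shortest-longest distance `φ` is the greatest fixed point of this
Bellman operator: every admissible blocking gives a post-fixed point, so its distances lie below
`φ`; conversely, blocking at each `u` exactly the arcs with `r u v + φ v < φ u` is admissible,
and in the resulting subgraph `φ` telescopes below the cost of every path to `t`.
-/

section Threshold

variable {α : Type*} {𝓘 : Set (Set α)} {S : Set α} {w : α → EReal}

noncomputable def threshold (𝓘 : Set (Set α)) (S : Set α) (w : α → EReal) : EReal :=
  sInf {d | {v ∈ S | w v ≤ d} ∉ 𝓘}

lemma threshold_le {d : EReal} (h : {v ∈ S | w v ≤ d} ∉ 𝓘) : threshold 𝓘 S w ≤ d :=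
  sInf_le h

lemma threshold_mono (h𝓘 : IsLowerSet 𝓘) {w' : α → EReal} (h : w ≤ w') :
    threshold 𝓘 S w ≤ threshold 𝓘 S w' :=
  sInf_le_sInf fun d hd hmem => hd <|
    h𝓘 (show {v ∈ S | w' v ≤ d} ⊆ {v ∈ S | w v ≤ d} from fun v hv => ⟨hv.1, (h v).trans hv.2⟩)
      hmem

lemma sep_le_threshold_notMem (hS : S.Finite) (h𝓘 : IsLowerSet 𝓘) (hS𝓘 : S ∉ 𝓘) :
    {v ∈ S | w v ≤ threshold 𝓘 S w} ∉ 𝓘 := by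
  set θ := threshold 𝓘 S w
  intro hmem
  have habove : {v ∈ S | θ < w v}.Nonempty := by
    by_contra! hempty
    refine hS𝓘 (h𝓘 (show S ⊆ {v ∈ S | w v ≤ θ} from fun v hv => ?_) hmem)
    exact ⟨hv, not_lt.1 fun hlt => hempty.subset ⟨hv, hlt⟩⟩
  obtain ⟨m, ⟨-, hθm⟩, hmin⟩ := Set.exists_min_image _ w (hS.sep _) habove
  -- no level below the least value `w m` above `θ` adds an arc to the independent set `hmem`
  have hmθ : w m ≤ θ := by
    refine le_sInf fun d hd => not_lt.1 fun hdm => hd (h𝓘 ?_ hmem)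
    exact fun v hv =>
      ⟨hv.1, not_lt.1 fun hθv => (hmin v ⟨hv.1, hθv⟩).not_gt (hv.2.trans_lt hdm)⟩
  exact hθm.not_ge hmθ

lemma sep_lt_threshold_mem (hS : S.Finite) (h𝓘 : ∅ ∈ 𝓘) :
    {v ∈ S | w v < threshold 𝓘 S w} ∈ 𝓘 := by
  set θ := threshold 𝓘 S w
  rcases Set.eq_empty_or_nonempty {v ∈ S | w v < θ} with hempty | hne
  · rwa [hempty]
  obtain ⟨m, ⟨-, hmθ⟩, hmax⟩ := Set.exists_max_image _ w (hS.sep _) hne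
  have hsep : {v ∈ S | w v ≤ w m} = {v ∈ S | w v < θ} :=
    Set.ext fun v => ⟨fun hv => ⟨hv.1, hv.2.trans_lt hmθ⟩, fun hv => ⟨hv.1, hmax v hv⟩⟩
  by_contra hnot
  exact (threshold_le (hsep ▸ hnot)).not_gt hmθ

lemma exists_eq_threshold (hS : S.Finite) (h𝓘 : IsLowerSet 𝓘) (hS𝓘 : S ∉ 𝓘)
    (hempty : ∅ ∈ 𝓘) :
    ∃ v ∈ S, w v = threshold 𝓘 S w := by
  have hnot : ¬ {v ∈ S | w v ≤ threshold 𝓘 S w} ⊆ {v ∈ S | w v < threshold 𝓘 S w} :=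
    fun hsub =>
      sep_le_threshold_notMem hS h𝓘 hS𝓘 (h𝓘 hsub (sep_lt_threshold_mem hS hempty))
  obtain ⟨v, ⟨hvS, hle⟩, hnlt⟩ := Set.not_subset.1 hnot
  exact ⟨v, hvS, hle.antisymm (not_lt.1 fun hlt => hnlt ⟨hvS, hlt⟩)⟩

end Threshold

section Paths

lemma pathCost_cons (r : V → V → ℝ) (a b : V) (l : List V) :
    pathCost r (a :: b :: l) = r a b + pathCost r (b :: l) := by
  simp [pathCost]

lemma pathCost_le_of_suffix {P : V → V → Prop} {r : V → V → ℝ}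
    (hnn : ∀ a b, P a b → 0 ≤ r a b) {p s : List V} (hp : List.IsChain P p) (hs : s <:+ p) :
    pathCost r s ≤ pathCost r p := by
  induction p with
  | nil => rw [List.suffix_nil.1 hs]
  | cons a l ih =>
    rcases List.suffix_cons_iff.1 hs with rfl | hs
    · exact le_rfl
    refine (ih hp.tail hs).trans ?_
    cases l with
    | nil => simp [pathCost]
    | cons b l =>
      rw [pathCost_cons]
      linarith [hnn a b (List.isChain_cons_cons.1 hp).1]

/-- If `u` already lies on the path, shortcut to its occurrence instead of prepending it. -/
lemma exists_isPathL_cons_le {P : V → V → Prop} {r : V → V → ℝ}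
    (hnn : ∀ a b, P a b → 0 ≤ r a b) {u v t : V} (huv : P u v) {p : List V}
    (hp : IsPathL P v t p) :
    ∃ q, IsPathL P u t q ∧ pathCost r q ≤ r u v + pathCost r p := by
  obtain ⟨hchain, hhead, hlast, hnodup⟩ := hp
  obtain ⟨l, rfl⟩ : ∃ l, p = v :: l := by
    cases p with
    | nil => simp at hhead
    | cons v' l => exact ⟨l, by simpa using hhead⟩
  by_cases hu : u ∈ v :: l
  · obtain ⟨l₁, l₂, hsplit⟩ := List.append_of_mem hu
    have hsuffix : u :: l₂ <:+ v :: l := ⟨l₁, hsplit.symm⟩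
    refine ⟨u :: l₂, ⟨hchain.suffix hsuffix, rfl, ?_, hnodup.sublist hsuffix.sublist⟩, ?_⟩
    · rwa [hsplit, List.getLast?_append_cons] at hlast
    · linarith [pathCost_le_of_suffix (r := r) hnn hchain hsuffix, hnn u v huv]
  · refine ⟨u :: v :: l, ⟨List.isChain_cons_cons.2 ⟨huv, hchain⟩, rfl, ?_,
      List.nodup_cons.2 ⟨hu, hnodup⟩⟩, (pathCost_cons r u v l).le⟩
    rwa [List.getLast?_cons_cons]

lemma le_pathCost_of_isChain {P : V → V → Prop} {r : V → V → ℝ} {φ : V → EReal} {t : V}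
    (hφt : φ t = 0) (hstep : ∀ a b, P a b → φ a ≤ (r a b : EReal) + φ b) :
    ∀ {p : List V} {u : V}, List.IsChain P p → p.head? = some u → p.getLast? = some t →
      φ u ≤ (pathCost r p : EReal)
  | [], _, _, hhead, _ => by simp at hhead
  | [a], u, _, hhead, hlast => by
    obtain rfl : a = u := by simpa using hhead
    obtain rfl : a = t := by simpa using hlast
    simp [pathCost, hφt]
  | a :: b :: l, u, hchain, hhead, hlast => by
    obtain rfl : a = u := by simpa using hhead
    have htail := le_pathCost_of_isChain hφt hstep (List.isChain_cons_cons.1 hchain).2 rfl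
      (by rwa [List.getLast?_cons_cons] at hlast)
    calc φ a ≤ (r a b : EReal) + φ b := hstep a b (List.isChain_cons_cons.1 hchain).1
      _ ≤ (r a b : EReal) + (pathCost r (b :: l) : EReal) := by gcongr
      _ = (pathCost r (a :: b :: l) : EReal) := by rw [pathCost_cons, EReal.coe_add]

end Paths

section BlockedDist

variable {E : V → V → Prop} {r : V → V → ℝ} {t : V} {I : V → Set V}

lemma blockedDist_self_le_zero : blockedDist E r t I t ≤ 0 :=
  sInf_le ⟨[t], ⟨List.isChain_singleton _, rfl, rfl, List.nodup_singleton t⟩,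
    by simp [pathCost]⟩

lemma blockedDist_le_add (hnn : ∀ a b, E a b → 0 ≤ r a b) {u v : V} (huv : E u v)
    (hv : v ∉ I u) : blockedDist E r t I u ≤ (r u v : EReal) + blockedDist E r t I v := by
  rw [add_comm, ← EReal.sub_le_iff_le_add (.inl (EReal.coe_ne_bot _)) (.inl (EReal.coe_ne_top _))]
  refine le_sInf ?_
  rintro _ ⟨p, hp, rfl⟩
  rw [EReal.sub_le_iff_le_add (.inl (EReal.coe_ne_bot _)) (.inl (EReal.coe_ne_top _))]
  obtain ⟨q, hq, hcost⟩ :=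
    exists_isPathL_cons_le (r := r) (fun a b h => hnn a b h.1) ⟨huv, hv⟩ hp
  calc blockedDist E r t I u ≤ (pathCost r q : EReal) := sInf_le ⟨q, hq, rfl⟩
    _ ≤ ((pathCost r p + r u v : ℝ) : EReal) := by exact_mod_cast by linarith
    _ = (pathCost r p : EReal) + (r u v : EReal) := EReal.coe_add _ _

lemma le_blockedDist {φ : V → EReal} (hφt : φ t = 0)
    (hstep : ∀ a b, E a b → b ∉ I a → φ a ≤ (r a b : EReal) + φ b) (u : V) :
    φ u ≤ blockedDist E r t I u :=
  le_sInf fun _ ⟨_, ⟨hchain, hhead, hlast, _⟩, hc⟩ =>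
    hc ▸ le_pathCost_of_isChain hφt (fun a b h => hstep a b h.1 h.2) hchain hhead hlast

end BlockedDist

section Bellman

variable {E : V → V → Prop} {t : V} {r : V → V → ℝ} {𝓘 : V → Set (Set V)}

noncomputable def blockingBellman (E : V → V → Prop) (t : V) (r : V → V → ℝ)
    (𝓘 : V → Set (Set V)) (ψ : V → EReal) (u : V) : EReal :=
  if u = t then 0 else threshold (𝓘 u) {v | E u v} fun v => r u v + ψ v

lemma blockingBellman_mono (hlow : ∀ u, u ≠ t → IsLowerSet (𝓘 u)) :
    Monotone (blockingBellman E t r 𝓘) := by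
  intro ψ ψ' h u
  unfold blockingBellman
  split_ifs with hu
  · exact le_rfl
  · exact threshold_mono (hlow u hu) fun v => add_le_add le_rfl (h v)

lemma blockedDist_le_blockingBellman [Finite V] (hnn : ∀ a b, E a b → 0 ≤ r a b)
    (hlow : ∀ u, u ≠ t → IsLowerSet (𝓘 u))
    (hfull : ∀ u, u ≠ t → {v | E u v} ∉ 𝓘 u) {I : V → Set V} (hI : ∀ w, w ≠ t → I w ∈ 𝓘 w) :
    blockedDist E r t I ≤ blockingBellman E t r 𝓘 (blockedDist E r t I) := by
  intro u
  unfold blockingBellman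
  split_ifs with hu
  · exact hu ▸ blockedDist_self_le_zero
  have hdep := sep_le_threshold_notMem
    (w := fun v => (r u v : EReal) + blockedDist E r t I v) (Set.toFinite _) (hlow u hu)
    (hfull u hu)
  obtain ⟨v, ⟨huv, hv⟩, hvI⟩ := Set.not_subset.1 fun hsub => hdep (hlow u hu hsub (hI u hu))
  exact (blockedDist_le_add hnn huv hvI).trans hv

end Bellman

theorem modified_dijkstra_spec_general [Fintype V]
    (E : V → V → Prop) (t : V) (r : V → V → ℝ)
    (hnn : ∀ u v, E u v → 0 ≤ r u v)
    (htermt : ∀ w, ¬ E t w)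
    (𝓘 : V → Set (Set V))
    (hempty : ∀ u, u ≠ t → ∅ ∈ 𝓘 u)
    (hdc : ∀ u, u ≠ t → ∀ I ∈ 𝓘 u, ∀ J ⊆ I, J ∈ 𝓘 u)
    (hfull : ∀ u, u ≠ t → {v | E u v} ∉ 𝓘 u) :
    ∃ (φ : V → EReal) (Ihat : V → Set V), φ t = 0 ∧
      (∀ u, u ≠ t → Ihat u ∈ 𝓘 u) ∧
      (∀ u, u ≠ t → ∀ v ∈ Ihat u, (r u v : EReal) + φ v ≤ φ u) ∧
      (∀ u, u ≠ t → ∀ v, E u v → v ∉ Ihat u → φ u ≤ (r u v : EReal) + φ v) ∧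
      (∀ u, u ≠ t → ∃ v, E u v ∧ v ∉ Ihat u ∧ φ u = (r u v : EReal) + φ v) ∧
      (∀ u, u ≠ t → {v | E u v ∧ (r u v : EReal) + φ v ≤ φ u} ∉ 𝓘 u) ∧
      (∀ u, φ u = sSup {d : EReal | ∃ I : V → Set V,
        (∀ w, w ≠ t → I w ∈ 𝓘 w) ∧ d = blockedDist E r t I u}) := by
  have hlow : ∀ u, u ≠ t → IsLowerSet (𝓘 u) := fun u hu _ _ hJI hI => hdc u hu _ hI _ hJI
  let F : (V → EReal) →o (V → EReal) :=
    ⟨blockingBellman E t r 𝓘, blockingBellman_mono hlow⟩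
  set φ := F.gfp
  have hφ : ∀ u, u ≠ t → threshold (𝓘 u) {v | E u v} (fun v => r u v + φ v) = φ u :=
    fun u hu => (if_neg hu).symm.trans (congrFun F.map_gfp u)
  have hφt : φ t = 0 := (congrFun F.map_gfp t).symm.trans (if_pos rfl)
  let Ihat u : Set V := {v | E u v ∧ (r u v : EReal) + φ v < φ u}
  have hunblocked :
      ∀ u, u ≠ t → ∀ v, E u v → v ∉ Ihat u → φ u ≤ (r u v : EReal) + φ v :=
    fun u _ v huv hv => not_lt.1 fun hlt => hv ⟨huv, hlt⟩
  have hind : ∀ u, u ≠ t → Ihat u ∈ 𝓘 u := fun u hu => by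
    simp only [Ihat, ← hφ u hu]
    exact sep_lt_threshold_mem (Set.toFinite _) (hempty u hu)
  refine ⟨φ, Ihat, hφt, hind, fun u _ v hv => hv.2.le, hunblocked, fun u hu => ?_,
    fun u hu => ?_, fun u => le_antisymm ?_ (sSup_le ?_)⟩
  · obtain ⟨v, huv, hv⟩ := exists_eq_threshold (w := fun v => (r u v : EReal) + φ v)
      (Set.toFinite _) (hlow u hu) (hfull u hu) (hempty u hu)
    exact ⟨v, huv, fun hvI => hvI.2.ne (hv.trans (hφ u hu)), (hv.trans (hφ u hu)).symm⟩
  · rw [← hφ u hu]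
    exact sep_le_threshold_notMem (Set.toFinite _) (hlow u hu) (hfull u hu)
  · refine le_sSup_of_le ⟨Ihat, hind, rfl⟩ (le_blockedDist hφt (fun a b hab hb => ?_) u)
    exact hunblocked a (fun hat => htermt b (hat ▸ hab)) b hab hb
  · rintro _ ⟨I, hI, rfl⟩
    exact F.le_gfp (blockedDist_le_blockingBellman hnn hlow hfull hI) u

/-- specification of the modified Dijkstra algorithm: for a finite digraph
with nonnegative weights, target `t` and blocking (independence) systems `𝓘(u)` on the
out-neighborhoods with the full out-neighborhood dependent, there exist `φ` and blocking
sets `Ihat(u) ∈ 𝓘(u)` satisfying the four output conditions, and consequently `φ(u)` equals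
the maximum over all admissible subgraphs of the shortest `r`-distance from `u` to `t`. -/
theorem modified_dijkstra_spec [Fintype V]
    (E : V → V → Prop) (t : V) (r : V → V → ℝ)
    (hnn : ∀ u v, E u v → 0 ≤ r u v)
    (htermt : ∀ w, ¬ E t w)
    (𝓘 : V → Set (Set V))
    (hsub : ∀ u, u ≠ t → ∀ I ∈ 𝓘 u, I ⊆ {v | E u v})
    (hempty : ∀ u, u ≠ t → ∅ ∈ 𝓘 u)
    (hdc : ∀ u, u ≠ t → ∀ I ∈ 𝓘 u, ∀ J ⊆ I, J ∈ 𝓘 u)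
    (hfull : ∀ u, u ≠ t → {v | E u v} ∉ 𝓘 u) :
    ∃ (φ : V → EReal) (Ihat : V → Set V), φ t = 0 ∧
      (∀ u, u ≠ t → Ihat u ∈ 𝓘 u) ∧
      (∀ u, u ≠ t → ∀ v ∈ Ihat u, (r u v : EReal) + φ v ≤ φ u) ∧
      (∀ u, u ≠ t → ∀ v, E u v → v ∉ Ihat u → φ u ≤ (r u v : EReal) + φ v) ∧
      (∀ u, u ≠ t → ∃ v, E u v ∧ v ∉ Ihat u ∧ φ u = (r u v : EReal) + φ v) ∧
      (∀ u, u ≠ t → {v | E u v ∧ (r u v : EReal) + φ v ≤ φ u} ∉ 𝓘 u) ∧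
      (∀ u, φ u = sSup {d : EReal | ∃ I : V → Set V,
        (∀ w, w ≠ t → I w ∈ 𝓘 w) ∧ d = blockedDist E r t I u}) :=
  modified_dijkstra_spec_general E t r hnn htermt 𝓘 hempty hdc hfull
end
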